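/- Let b_4 : ℕ → {0,1,2,3} be the fixed point starting with 0 of the morphism 0 ↦ 01, 1 ↦ 21, 2 ↦ 03, 3 ↦ 23, and let g_6 be the 5-uniform morphism from {0,1,2,3}* to {0,1,2,3,4,5}* defined by g_6(0) = 01230, g_6(1) = 24134, g_6(2) = 52340, g_6(3) = 24513. Then the infinite word g_6(b_4) over 6 letters avoids every conjugacy class of length at least 2: there is no finite word u with |u| ≥ 2 such that every cyclic conjugate of u is a factor of g_6(b_4). -/

import Mathlib

/-!
Every factor of length 4 of `g₆(b₄)` determines its position modulo 5. Hence a conjugacy class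
of length `n ≥ 5` has `5 ∣ n` and, read at the right phase, is the image under `g₆` of a cyclic
word `V` of length `m = n / 5` whose windows of length `m + 1` are all factors of `b₄` (a block of
`g₆` is determined by its first three letters, and also by its last two). The lengths 2, 3, 4 are
excluded by inspecting the finitely many short factors of `g₆(b₄)`.

Letters of `b₄` alternate in parity, which rules out odd `m`. For even `m` one desubstitutes `mb4`
and descends to `m / 2`, at the price of knowing the first letter of each window only up to
`mb4Snd`. At `m = 2` this leaves `b₄(2t) = b₄(2t + 2)`, impossible since `b₄(2t) = 2 (t mod 2)`.
-/

/-- `u` is a factor of the infinite word `x`. -/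
def IsFactorOfInf {α : Type*} (u : List α) (x : ℕ → α) : Prop :=
  ∃ i : ℕ, u = (List.range u.length).map fun j => x (i + j)

/-- The morphism `0 ↦ 01, 1 ↦ 21, 2 ↦ 03, 3 ↦ 23` whose fixed point
starting with `0` is `b₄`. -/
def mb4 : Fin 4 → List (Fin 4) := ![[0, 1], [2, 1], [0, 3], [2, 3]]

/-- The 5-uniform morphism `g₆ : {0,1,2,3}* → {0,1,2,3,4,5}*`. -/
def g6 : Fin 4 → List (Fin 6) :=
  ![[0, 1, 2, 3, 0], [2, 4, 1, 3, 4], [5, 2, 3, 4, 0], [2, 4, 5, 1, 3]]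

open Function

def WindowsOccur {α : Type*} (V : ℕ → α) (L : ℕ) (x : ℕ → α) : Prop :=
  ∀ s, ∃ k, ∀ j < L, V (s + j) = x (k + j)

theorem WindowsOccur.shift {α : Type*} {V x : ℕ → α} {L : ℕ} (h : WindowsOccur V L x) (r : ℕ) :
    WindowsOccur (fun z => V (r + z)) L x := fun s => by
  simpa only [add_assoc] using h (r + s)

theorem isFactorOfInf_iff_getElem {α : Type*} {u : List α} {x : ℕ → α} :
    IsFactorOfInf u x ↔ ∃ i, ∀ j (hj : j < u.length), u[j] = x (i + j) := by
  refine exists_congr fun i => ⟨fun h j hj => ?_, fun h => List.ext_getElem (by simp) ?_⟩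
  · rw [List.getElem_of_eq h hj, List.getElem_map, List.getElem_range]
  · intro j hj _
    rw [h j hj, List.getElem_map, List.getElem_range]

theorem windowsOccur_of_isFactorOfInf_rotate {α : Type*} {u : List α} {x : ℕ → α}
    (h : ∀ r, IsFactorOfInf (u.rotate r) x) (d : α) :
    WindowsOccur (fun z => u.getD (z % u.length) d) u.length x := by
  intro s
  obtain ⟨i, hi⟩ := isFactorOfInf_iff_getElem.mp (h s)
  refine ⟨i, fun j hj => ?_⟩
  have hpos : 0 < u.length := by omega
  rw [← hi j (by simpa using hj), List.getElem_rotate, add_comm j]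
  exact List.getD_eq_getElem _ _ (Nat.mod_lt _ hpos)

theorem WindowsOccur.exists_aligned {α : Type*} {x U : ℕ → α} {L q n : ℕ} (hq : 0 < q)
    (hsync : ∀ p p', (∀ j < L, x (p + j) = x (p' + j)) → p ≡ p' [MOD q])
    (hU : Periodic U n) (hLn : L < n) (hocc : WindowsOccur U n x) :
    q ∣ n ∧ ∃ r, ∀ z p, (∀ j < L, U (r + z + j) = x (p + j)) → p ≡ z [MOD q] := by
  choose P hP using hocc
  have phase : ∀ z p, (∀ j < L, U (z + j) = x (p + j)) → p ≡ P z [MOD q] := fun z p h =>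
    hsync p (P z) fun j hj => (h j hj).symm.trans (hP z j (by omega))
  have hlin : ∀ z, P 0 + z ≡ P z [MOD q] := by
    intro z
    induction z with
    | zero => rfl
    | succ z ih =>
      refine (Nat.ModEq.add_right 1 ih).trans (phase (z + 1) (P z + 1) fun j hj => ?_)
      rw [add_right_comm, add_assoc, add_assoc, add_comm j]
      exact hP z (1 + j) (by omega)
  refine ⟨?_, (q - 1) * P 0, fun z p h => (phase _ p h).trans ((hlin _).symm.trans ?_)⟩
  · have hn : P 0 + n ≡ P 0 + 0 [MOD q] := (hlin n).trans <| (phase n (P 0) fun j hj => by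
      rw [add_comm n, hU]; simpa using hP 0 j (by omega)).symm
    exact (Nat.modEq_zero_iff_dvd).mp (Nat.ModEq.add_left_cancel' _ hn)
  · have : P 0 + ((q - 1) * P 0 + z) = q * P 0 + z := by
      obtain ⟨q, rfl⟩ := Nat.exists_eq_add_of_lt hq
      simp only [Nat.zero_add, Nat.add_sub_cancel]
      ring
    rw [this]
    exact Nat.mul_add_mod q (P 0) z

def g6Word (b : ℕ → Fin 4) : ℕ → Fin 6 := fun n => (g6 (b (n / 5))).getD (n % 5) 0

/-- The windows of length `L` of `g₆(b)`, paired with their phase, for any `b` whose adjacent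
letters differ in parity. -/
def g6Windows (L : ℕ) : List (ℕ × List (Fin 6)) :=
  (List.finRange 4).flatMap fun a => (List.finRange 4).flatMap fun b =>
    if a.val % 2 = b.val % 2 then [] else
      (List.range 5).map fun i => (i, ((g6 a ++ g6 b).drop i).take L)

theorem g6Windows_phase_unique :
    ∀ e ∈ g6Windows 4, ∀ e' ∈ g6Windows 4, e.2 = e'.2 → e.1 = e'.1 := by
  decide

theorem exists_rotate_not_mem_g6Windows : ∀ L < 5, 2 ≤ L →
    ∀ w ∈ (g6Windows L).map Prod.snd, ∃ r < L, w.rotate r ∉ (g6Windows L).map Prod.snd := by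
  decide

theorem eq_of_g6_prefix_agree :
    ∀ a b : Fin 4, (∀ l < 3, (g6 a).getD l 0 = (g6 b).getD l 0) → a = b := by
  decide

theorem eq_of_g6_suffix_agree :
    ∀ a b : Fin 4, (∀ l < 2, (g6 a).getD (3 + l) 0 = (g6 b).getD (3 + l) 0) → a = b := by
  decide

theorem g6_length (a : Fin 4) : (g6 a).length = 5 := by
  fin_cases a <;> rfl

section G6Word

variable {b : ℕ → Fin 4}

theorem g6Word_five_mul_add (t : ℕ) {l : ℕ} (hl : l < 5) :
    g6Word b (5 * t + l) = (g6 (b t)).getD l 0 := by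
  simp only [g6Word]
  congr 3 <;> omega

theorem g6Word_five_mul_add_of_lt_ten (t : ℕ) {l : ℕ} (hl : l < 10) :
    g6Word b (5 * t + l) = (g6 (b t) ++ g6 (b (t + 1))).getD l 0 := by
  rcases Nat.lt_or_ge l 5 with h | h
  · rw [List.getD_append _ _ _ _ (by rw [g6_length]; omega), g6Word_five_mul_add t h]
  · rw [List.getD_append_right _ _ _ _ (by rw [g6_length]; omega), g6_length,
      show 5 * t + l = 5 * (t + 1) + (l - 5) by omega, g6Word_five_mul_add _ (by omega)]

theorem mem_g6Windows (hb : ∀ t, (b t).val % 2 ≠ (b (t + 1)).val % 2) (p : ℕ) {L : ℕ}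
    (hL : L ≤ 6) : (p % 5, (List.range L).map fun j => g6Word b (p + j)) ∈ g6Windows L := by
  have hwin : ((List.range L).map fun j => g6Word b (p + j)) =
      ((g6 (b (p / 5)) ++ g6 (b (p / 5 + 1))).drop (p % 5)).take L := by
    refine List.ext_getElem ?_ fun j hj _ => ?_
    · simp only [List.length_map, List.length_range, List.length_take, List.length_drop,
        List.length_append, g6_length]
      omega
    rw [List.getElem_map, List.getElem_range, List.getElem_take, List.getElem_drop,
      ← List.getD_eq_getElem _ 0, ← g6Word_five_mul_add_of_lt_ten _
        (by rw [List.length_map, List.length_range] at hj; omega)]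
    congr 1
    omega
  simp only [g6Windows, List.mem_flatMap, List.mem_finRange, true_and]
  refine ⟨b (p / 5), b (p / 5 + 1), ?_⟩
  rw [if_neg (hb _), hwin]
  exact List.mem_map.mpr ⟨p % 5, List.mem_range.mpr (Nat.mod_lt _ (by norm_num)), rfl⟩

theorem g6Word_mod_five_eq (hb : ∀ t, (b t).val % 2 ≠ (b (t + 1)).val % 2) {p p' : ℕ}
    (h : ∀ j < 4, g6Word b (p + j) = g6Word b (p' + j)) : p ≡ p' [MOD 5] :=
  g6Windows_phase_unique _ (mem_g6Windows hb p (by norm_num)) _ (mem_g6Windows hb p' (by norm_num))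
    (List.map_congr_left fun j hj => h j (List.mem_range.mp hj))

end G6Word

theorem not_forall_isFactorOfInf_rotate_of_lt_five {b : ℕ → Fin 4}
    (hb : ∀ t, (b t).val % 2 ≠ (b (t + 1)).val % 2) {u : List (Fin 6)} (h2 : 2 ≤ u.length)
    (h5 : u.length < 5) (hrot : ∀ r, IsFactorOfInf (u.rotate r) (g6Word b)) : False := by
  have hmem : ∀ r, u.rotate r ∈ (g6Windows u.length).map Prod.snd := fun r => by
    obtain ⟨p, hp⟩ := hrot r
    rw [hp, List.length_rotate]
    exact List.mem_map_of_mem (f := Prod.snd) (mem_g6Windows hb p (by omega))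
  obtain ⟨r, -, hr⟩ := exists_rotate_not_mem_g6Windows _ h5 h2 u (by simpa using hmem 0)
  exact hr (hmem r)

theorem exists_windowsOccur_of_g6Word {b : ℕ → Fin 4} {U : ℕ → Fin 6} {m : ℕ}
    (hU : Periodic U (5 * m)) (hm : 0 < m) (hocc : WindowsOccur U (5 * m) (g6Word b))
    (halign : ∀ z p, (∀ j < 4, U (z + j) = g6Word b (p + j)) → p ≡ z [MOD 5]) :
    ∃ V : ℕ → Fin 4, Periodic V m ∧ WindowsOccur V (m + 1) b := by
  have aligned_occ : ∀ s l, l < 5 →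
      ∃ k, ∀ j < 5 * m, U (5 * s + l + j) = g6Word b (5 * k + l + j) := by
    intro s l hl
    obtain ⟨p, hp⟩ := hocc (5 * s + l)
    have hphase : p % 5 = (5 * s + l) % 5 := halign _ p fun j hj => hp j (by omega)
    refine ⟨p / 5, fun j hj => ?_⟩
    rw [hp j hj]
    congr 2
    omega
  have blocks : ∀ s, ∃ a, ∀ l < 5, U (5 * s + l) = (g6 a).getD l 0 := by
    intro s
    obtain ⟨k, hk⟩ := aligned_occ s 0 (by norm_num)
    exact ⟨b k, fun l hl => by simpa [g6Word_five_mul_add k hl] using hk l (by omega)⟩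
  choose V hV using blocks
  refine ⟨V, fun s => eq_of_g6_prefix_agree _ _ fun l hl => ?_, fun s => ?_⟩
  · rw [← hV _ l (by omega), ← hV _ l (by omega), mul_add, add_right_comm, hU]
  -- an occurrence at phase 3 sees the last two letters of one block and the first three of
  -- the block `m` later, and each of these determines its letter
  obtain ⟨k, hk⟩ := aligned_occ s 3 (by norm_num)
  refine ⟨k, fun j hj => ?_⟩
  rcases j with _ | j
  · simp only [Nat.add_zero]
    refine eq_of_g6_suffix_agree _ _ fun l hl => ?_
    rw [← hV s _ (by omega), ← g6Word_five_mul_add k (by omega), ← add_assoc, ← add_assoc]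
    exact hk l (by omega)
  · refine eq_of_g6_prefix_agree _ _ fun l hl => ?_
    rw [← hV _ l (by omega), ← g6Word_five_mul_add _ (by omega)]
    convert hk (5 * j + 2 + l) (by omega) using 2 <;> ring

def mb4Fst : Fin 4 → Fin 4 := ![0, 2, 0, 2]

def mb4Snd : Fin 4 → Fin 4 := ![1, 1, 3, 3]

theorem mb4_eq (a : Fin 4) : mb4 a = [mb4Fst a, mb4Snd a] := by
  fin_cases a <;> rfl

theorem mb4Fst_val_mod_two (a : Fin 4) : (mb4Fst a).val % 2 = 0 := by
  fin_cases a <;> rfl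

theorem mb4Snd_val_mod_two (a : Fin 4) : (mb4Snd a).val % 2 = 1 := by
  fin_cases a <;> rfl

theorem mb4Snd_mb4Snd (a : Fin 4) : mb4Snd (mb4Snd a) = mb4Snd a := by
  fin_cases a <;> rfl

theorem mb4Fst_eq_mb4Fst_iff {a a' : Fin 4} : mb4Fst a = mb4Fst a' ↔ a.val % 2 = a'.val % 2 := by
  revert a a'
  decide

theorem eq_of_mb4Snd_eq {a a' : Fin 4} (hpar : a.val % 2 = a'.val % 2)
    (h : mb4Snd a = mb4Snd a') : a = a' := by
  revert a a'
  decide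

/-- The weakening of `WindowsOccur V (m + 1) b` that survives desubstitution by `mb4`. -/
def WindowsOccurModSnd (b V : ℕ → Fin 4) (m : ℕ) : Prop :=
  ∀ s, ∃ k, mb4Snd (b k) = mb4Snd (V s) ∧ ∀ j < m, V (s + 1 + j) = b (k + 1 + j)

theorem WindowsOccurModSnd.shift {b V : ℕ → Fin 4} {m : ℕ} (h : WindowsOccurModSnd b V m)
    (r : ℕ) : WindowsOccurModSnd b (fun z => V (r + z)) m := fun s => by
  simpa only [add_assoc] using h (r + s)

section FixedPoint

variable {b4 : ℕ → Fin 4} (hfix : ∀ n, [b4 (2 * n), b4 (2 * n + 1)] = mb4 (b4 n))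
include hfix

theorem b4_two_mul (t : ℕ) : b4 (2 * t) = mb4Fst (b4 t) := by
  have h := hfix t
  simp only [mb4_eq, List.cons.injEq, and_true] at h
  exact h.1

theorem b4_two_mul_add_one (t : ℕ) : b4 (2 * t + 1) = mb4Snd (b4 t) := by
  have h := hfix t
  simp only [mb4_eq, List.cons.injEq, and_true] at h
  exact h.2

theorem b4_val_mod_two (n : ℕ) : (b4 n).val % 2 = n % 2 := by
  obtain ⟨t, rfl | rfl⟩ := Nat.even_or_odd' n
  · rw [b4_two_mul hfix, mb4Fst_val_mod_two]
    omega
  · rw [b4_two_mul_add_one hfix, mb4Snd_val_mod_two]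
    omega

theorem b4_two_mul_ne (t : ℕ) : b4 (2 * t) ≠ b4 (2 * t + 2) := by
  rw [show 2 * t + 2 = 2 * (t + 1) by ring, b4_two_mul hfix, b4_two_mul hfix, Ne,
    mb4Fst_eq_mb4Fst_iff, b4_val_mod_two hfix, b4_val_mod_two hfix]
  omega

variable {V : ℕ → Fin 4} {m : ℕ}

theorem val_mod_two_of_windowsOccurModSnd (hm : 2 ≤ m) (hV : Periodic V m)
    (h : WindowsOccurModSnd b4 V m) (z : ℕ) : (V z).val % 2 = ((V 0).val + z) % 2 := by
  have step : ∀ z, (V (z + 1)).val % 2 = ((V z).val + 1) % 2 := by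
    intro z
    obtain ⟨k, -, hk⟩ := h (z + (m - 1))
    have h0 := hk 0 (by omega)
    have h1 := hk 1 (by omega)
    rw [show z + (m - 1) + 1 + 0 = z + m by omega, hV] at h0
    rw [show z + (m - 1) + 1 + 1 = z + 1 + m by omega, hV] at h1
    have := b4_val_mod_two hfix (k + 1 + 0)
    have := b4_val_mod_two hfix (k + 1 + 1)
    rw [h0, h1]
    omega
  induction z with
  | zero => simp
  | succ z ih =>
    rw [step]
    omega

theorem exists_windowsOccurModSnd_of_two_mul (hm : 0 < m) (hV : Periodic V (2 * m))
    (hpar : ∀ z, (V z).val % 2 = z % 2) (h : WindowsOccurModSnd b4 V (2 * m)) :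
    ∃ W, Periodic W m ∧ WindowsOccurModSnd b4 W m := by
  have blocks : ∀ i, ∃ a, V (2 * i) = mb4Fst a ∧ V (2 * i + 1) = mb4Snd a := by
    intro i
    obtain ⟨k, -, hk⟩ := h (2 * i + (2 * m - 1))
    have h0 := hk 0 (by omega)
    have h1 := hk 1 (by omega)
    rw [show 2 * i + (2 * m - 1) + 1 + 0 = 2 * i + 2 * m by omega, hV] at h0
    rw [show 2 * i + (2 * m - 1) + 1 + 1 = 2 * i + 1 + 2 * m by omega, hV] at h1
    have hk1 := hpar (2 * i)
    rw [h0, b4_val_mod_two hfix] at hk1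
    refine ⟨b4 ((k + 1) / 2), ?_, ?_⟩
    · rw [h0, ← b4_two_mul hfix]
      congr 1
      omega
    · rw [h1, ← b4_two_mul_add_one hfix]
      congr 1
      omega
  choose W hW using blocks
  have hW_eq : ∀ i a, V (2 * i) = mb4Fst a → V (2 * i + 1) = mb4Snd a → W i = a :=
    fun i a h1 h2 => eq_of_mb4Snd_eq (mb4Fst_eq_mb4Fst_iff.mp ((hW i).1.symm.trans h1))
      ((hW i).2.symm.trans h2)
  refine ⟨W, fun i => hW_eq _ _ ?_ ?_, fun s => ?_⟩
  · rw [mul_add, hV, (hW i).1]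
  · rw [mul_add, add_right_comm, hV, (hW i).2]
  obtain ⟨k, hk0, hk⟩ := h (2 * s + 1)
  have hkodd : k % 2 = 1 := by
    have := hpar (2 * s + 1 + 1 + 0)
    rw [hk 0 (by omega), b4_val_mod_two hfix] at this
    omega
  refine ⟨k / 2, ?_, fun j hj => hW_eq _ _ ?_ ?_⟩
  · rw [← mb4Snd_mb4Snd, ← mb4Snd_mb4Snd (W s), ← (hW s).2, ← b4_two_mul_add_one hfix,
      show 2 * (k / 2) + 1 = k by omega, hk0]
  · rw [← b4_two_mul hfix]
    convert hk (2 * j) (by omega) using 2 <;> omega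
  · rw [← b4_two_mul_add_one hfix]
    convert hk (2 * j + 1) (by omega) using 2 <;> omega

theorem not_windowsOccurModSnd_two (hV : Periodic V 2) (hpar : ∀ z, (V z).val % 2 = z % 2)
    (h : WindowsOccurModSnd b4 V 2) : False := by
  obtain ⟨k, hk0, hk⟩ := h 0
  have h1 := hk 0 (by norm_num)
  have h2 := hk 1 (by norm_num)
  have hkeven : k % 2 = 0 := by
    have := hpar 1
    rw [h1, b4_val_mod_two hfix] at this
    omega
  have hbk : b4 k = V 0 := eq_of_mb4Snd_eq (by rw [hpar, b4_val_mod_two hfix]; omega) hk0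
  rw [← hV 0] at hbk
  refine b4_two_mul_ne hfix (k / 2) ?_
  rw [show 2 * (k / 2) = k by omega, hbk, h2]

theorem not_windowsOccurModSnd (hm : 2 ≤ m) (hV : Periodic V m)
    (h : WindowsOccurModSnd b4 V m) : False := by
  induction m using Nat.strong_induction_on generalizing V with
  | _ m IH =>
  have hpar := val_mod_two_of_windowsOccurModSnd hfix hm hV h
  obtain ⟨m, rfl⟩ : ∃ m', m = 2 * m' := ⟨m / 2, by have := hpar m; rw [hV.eq] at this; omega⟩
  -- shift `V` so that its letters have the parity of their positions, as in `b4`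
  have hpar' : ∀ z, (V ((V 0).val % 2 + z)).val % 2 = z % 2 := fun z => by
    rw [hpar]
    omega
  rcases (by omega : m = 1 ∨ 2 ≤ m) with rfl | hm
  · exact not_windowsOccurModSnd_two hfix (hV.const_add _) hpar' (h.shift _)
  · obtain ⟨W, hW, hWocc⟩ :=
      exists_windowsOccurModSnd_of_two_mul hfix (by omega) (hV.const_add _) hpar' (h.shift _)
    exact IH m (by omega) hm hW hWocc

theorem not_windowsOccur_b4 (hm : 0 < m) (hV : Periodic V m) (h : WindowsOccur V (m + 1) b4) :
    False := by
  rcases (by omega : m = 1 ∨ 2 ≤ m) with rfl | hm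
  · obtain ⟨k, hk⟩ := h 0
    have heq : b4 k = b4 (k + 1) :=
      ((hk 0 (by norm_num)).symm.trans (hV 0).symm).trans (hk 1 (by norm_num))
    have := congrArg (fun a : Fin 4 => a.val % 2) heq
    simp only [b4_val_mod_two hfix] at this
    omega
  refine not_windowsOccurModSnd hfix hm hV fun s => ?_
  obtain ⟨k, hk⟩ := h s
  refine ⟨k, by rw [← add_zero k, ← hk 0 (by omega), add_zero], fun j hj => ?_⟩
  rw [add_assoc, add_assoc, add_comm 1 j]
  exact hk (j + 1) (by omega)

end FixedPoint

theorem stmt_5_general (b4 : ℕ → Fin 4)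
    (hfix : ∀ n, [b4 (2 * n), b4 (2 * n + 1)] = mb4 (b4 n)) :
    ¬ ∃ u : List (Fin 6), 2 ≤ u.length ∧
        ∀ v w : List (Fin 6), u = w ++ v →
          IsFactorOfInf (v ++ w) (fun n => (g6 (b4 (n / 5))).getD (n % 5) 0) := by
  rintro ⟨u, hu, hconj⟩
  have hrot : ∀ r, IsFactorOfInf (u.rotate r) (g6Word b4) := fun r => by
    rw [← List.rotate_mod, List.rotate_eq_drop_append_take (Nat.mod_lt _ (by omega)).le]
    exact hconj _ _ (List.take_append_drop _ _).symm
  have hb : ∀ t, (b4 t).val % 2 ≠ (b4 (t + 1)).val % 2 := fun t => by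
    rw [b4_val_mod_two hfix, b4_val_mod_two hfix]
    omega
  rcases Nat.lt_or_ge u.length 5 with hsmall | hlarge
  · exact not_forall_isFactorOfInf_rotate_of_lt_five hb hu hsmall hrot
  · set U : ℕ → Fin 6 := fun z => u.getD (z % u.length) 0
    have hU : Periodic U u.length := fun z => by simp [U]
    have hocc : WindowsOccur U u.length (g6Word b4) := windowsOccur_of_isFactorOfInf_rotate hrot 0
    obtain ⟨⟨m, hm⟩, r, halign⟩ :=
      hocc.exists_aligned (by norm_num) (fun _ _ => g6Word_mod_five_eq hb) hU (by omega)
    rw [hm] at hU hocc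
    obtain ⟨V, hV, hVocc⟩ := exists_windowsOccur_of_g6Word (hU.const_add r) (by omega)
      (hocc.shift r) fun z p h => halign z p (by simpa only [add_assoc] using h)
    exact not_windowsOccur_b4 hfix (by omega) hV hVocc

/-- If `b₄` is the fixed point starting with `0` of the morphism
`0 ↦ 01, 1 ↦ 21, 2 ↦ 03, 3 ↦ 23`, then the infinite word `g₆(b₄)` over six
letters avoids every conjugacy class of length at least `2`: there is no word
`u` with `|u| ≥ 2` all of whose cyclic conjugates are factors of `g₆(b₄)`. -/
theorem stmt_5 (b4 : ℕ → Fin 4) (hb0 : b4 0 = 0)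
    (hfix : ∀ n, [b4 (2 * n), b4 (2 * n + 1)] = mb4 (b4 n)) :
    ¬ ∃ u : List (Fin 6), 2 ≤ u.length ∧
        ∀ v w : List (Fin 6), u = w ++ v →
          IsFactorOfInf (v ++ w) (fun n => (g6 (b4 (n / 5))).getD (n % 5) 0) :=
  stmt_5_general b4 hfix
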